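/- arXiv:2410.16250 — 5 statements merged into one kernel-verified Lean document; each statement's English description precedes it below -/
import Mathlib

section
/- Let C(X, Z/2) be a classical code complex C^0 → C^1 over F₂ with a pre-orientation satisfying the non-overlapping bits condition: for distinct checks a ≠ a' in X₀, δ_in(a) ∩ δ_in(a') = ∅ and δ_out(a) ∩ δ_out(a') = ∅. Then the cup product defined by a∪a = a, a∪x = x for x ∈ δ_out(a), x∪a = x for x ∈ δ_in(a) (and zero otherwise) is associative. -/
/-- Cochains of a two-term classical code complex `C⁰ → C¹` over `F₂` (degree-0 part,
degree-1 part); degrees ≥ 2 vanish. Bits are `X₁`, checks are `X₀`. -/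
abbrev CodeCochain (X₀ X₁ : Type*) := (X₀ → ZMod 2) × (X₁ → ZMod 2)

/-- The bilinear cup product induced by a pre-orientation: on basis elements
`a ∪ a = a` for a check `a`, `a ∪ x = x` for `x ∈ δ_out(a)`, `x ∪ a = x` for
`x ∈ δ_in(a)`, and zero otherwise (in particular degree-2 products vanish). -/
def codeCup {X₀ X₁ : Type*} [Fintype X₀] [DecidableEq X₁]
    (δin δout : X₀ → Finset X₁)
    (f g : CodeCochain X₀ X₁) : CodeCochain X₀ X₁ :=
  (fun a => f.1 a * g.1 a,
   fun x => g.2 x * ∑ a ∈ Finset.univ.filter (fun a => x ∈ δout a), f.1 a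
          + f.2 x * ∑ a ∈ Finset.univ.filter (fun a => x ∈ δin a), g.1 a)

lemma sum_mul_of_subsingleton {α : Type*} (S : Finset α) (p q : α → ZMod 2)
    (hS : ∀ a ∈ S, ∀ b ∈ S, a = b) :
    ∑ a ∈ S, p a * q a = (∑ a ∈ S, p a) * (∑ a ∈ S, q a) := by
  rcases S.eq_empty_or_nonempty with rfl | ⟨a, ha⟩
  · simp
  · have hS' : S = {a} := Finset.eq_singleton_iff_unique_mem.mpr
      ⟨ha, fun b hb => hS b hb a ha⟩
    simp [hS']

/-- For a classical code over `F₂` with a pre-orientation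
(`δ(a) = δ_in(a) ⊎ δ_out(a) ⊎ δ_free(a)`) satisfying the non-overlapping bits
condition, the cup product is associative. -/
theorem stmt9 {X₀ X₁ : Type*} [Fintype X₀] [DecidableEq X₁]
    (δ δin δout δfree : X₀ → Finset X₁)
    (hpart : ∀ a, δ a = δin a ∪ δout a ∪ δfree a)
    (hd1 : ∀ a, Disjoint (δin a) (δout a))
    (hd2 : ∀ a, Disjoint (δin a) (δfree a))
    (hd3 : ∀ a, Disjoint (δout a) (δfree a))
    (hno1 : ∀ a a', a ≠ a' → Disjoint (δin a) (δin a'))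
    (hno2 : ∀ a a', a ≠ a' → Disjoint (δout a) (δout a'))
    (f g h : CodeCochain X₀ X₁) :
    codeCup δin δout (codeCup δin δout f g) h
      = codeCup δin δout f (codeCup δin δout g h) := by
  refine Prod.ext (funext fun a => mul_assoc _ _ _) (funext fun x => ?_)
  simp only [codeCup]
  have key : ∀ (d : X₀ → Finset X₁), (∀ a a', a ≠ a' → Disjoint (d a) (d a')) →
      ∀ (p q : X₀ → ZMod 2),
      ∑ a ∈ Finset.univ.filter (fun a => x ∈ d a), p a * q a
        = (∑ a ∈ Finset.univ.filter (fun a => x ∈ d a), p a)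
          * (∑ a ∈ Finset.univ.filter (fun a => x ∈ d a), q a) := by
    intro d hd p q
    refine sum_mul_of_subsingleton _ _ _ ?_
    intro a ha b hb
    simp only [Finset.mem_filter] at ha hb
    by_contra hne
    exact (Finset.disjoint_left.mp (hd a b hne)) ha.2 hb.2
  rw [key δout hno2 f.1 g.1, key δin hno1 g.1 h.1]
  ring
end

section
/- Let C(X, Z/2) be a two-term complex over F₂ with a pre-orientation and the associated cup product, with the 1-dimensional integral ∫₁ mapping each basis bit to 1. For Λ = 2, the integrated Leibniz rule ∫₁(δ(a₁)∪a₂ + a₁∪δ(a₂)) = 0 mod 2 for all a₁, a₂ ∈ X₀ holds if and only if: |δ_in(a)| + |δ_out(a)| ≡ 0 mod 2 for all a ∈ X₀, and |δ_in(a₁)∩δ_in(a₂)| + |δ_out(a₁)∩δ_out(a₂)| + |δ_out(a₁)∩δ_free(a₂)| + |δ_free(a₁)∩δ_in(a₂)| ≡ 0 mod 2 for all a₁ ≠ a₂ in X₀. -/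
/-- The coboundary `δ : C⁰ → C¹` of the two-term complex (degree-1 elements map to 0). -/
def deltaHat {X₀ X₁ : Type*} [Fintype X₀] [DecidableEq X₁]
    (δ : X₀ → Finset X₁) (f : CodeCochain X₀ X₁) : CodeCochain X₀ X₁ :=
  (0, fun x => ∑ a ∈ Finset.univ.filter (fun a => x ∈ δ a), f.1 a)

/-- The 1-dimensional integral sending every bit to `1` (and degree-0 elements to `0`). -/
def integ {X₀ X₁ : Type*} [Fintype X₁] (f : CodeCochain X₀ X₁) : ZMod 2 :=
  ∑ x : X₁, f.2 x

/-- The indicator cochain of a single check `a ∈ X₀`. -/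
def checkBasis {X₀ X₁ : Type*} [DecidableEq X₀] (a : X₀) : CodeCochain X₀ X₁ :=
  (fun a' => if a' = a then 1 else 0, 0)


section Aux
variable {X₀ X₁ : Type*} [Fintype X₀] [Fintype X₁] [DecidableEq X₀] [DecidableEq X₁]

set_option linter.unusedSectionVars false

lemma sum_ind_mul (A B : Finset X₁) :
    (∑ x : X₁, (if x ∈ A then (1:ZMod 2) else 0) * (if x ∈ B then 1 else 0))
      = ((A ∩ B).card : ZMod 2) := by
  simp only [ite_zero_mul_ite_zero, one_mul, Finset.sum_boole]
  have : Finset.univ.filter (fun x => x ∈ A ∧ x ∈ B) = A ∩ B := by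
    ext x; simp
  rw [this]

lemma cardsplit (A B C D : Finset X₁) (h1 : Disjoint A B) (h2 : Disjoint A C)
    (h3 : Disjoint B C) :
    (((A ∪ B ∪ C) ∩ D).card : ZMod 2)
      = ((A ∩ D).card : ZMod 2) + (B ∩ D).card + (C ∩ D).card := by
  rw [Finset.union_inter_distrib_right, Finset.union_inter_distrib_right,
    Finset.card_union_of_disjoint, Finset.card_union_of_disjoint]
  · push_cast; ring
  · exact h1.mono Finset.inter_subset_left Finset.inter_subset_left
  · exact Finset.disjoint_union_left.mpr
      ⟨h2.mono Finset.inter_subset_left Finset.inter_subset_left,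
       h3.mono Finset.inter_subset_left Finset.inter_subset_left⟩

lemma key (δ δin δout δfree : X₀ → Finset X₁)
    (hpart : ∀ a, δ a = δin a ∪ δout a ∪ δfree a)
    (hd1 : ∀ a, Disjoint (δin a) (δout a))
    (hd2 : ∀ a, Disjoint (δin a) (δfree a))
    (hd3 : ∀ a, Disjoint (δout a) (δfree a)) (a₁ a₂ : X₀) :
    integ (codeCup δin δout (deltaHat δ (checkBasis a₁)) (checkBasis a₂)
        + codeCup δin δout (checkBasis a₁) (deltaHat δ (checkBasis a₂)))
      = (((δin a₁ ∩ δin a₂).card + (δout a₁ ∩ δout a₂).card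
          + (δout a₁ ∩ δfree a₂).card + (δfree a₁ ∩ δin a₂).card : ℕ) : ZMod 2) := by
  have step : integ (codeCup δin δout (deltaHat δ (checkBasis a₁)) (checkBasis a₂)
        + codeCup δin δout (checkBasis a₁) (deltaHat δ (checkBasis a₂)))
      = ((δ a₁ ∩ δin a₂).card : ZMod 2) + ((δ a₂ ∩ δout a₁).card : ZMod 2) := by
    rw [← sum_ind_mul (δ a₁) (δin a₂), ← sum_ind_mul (δ a₂) (δout a₁)]
    rw [integ, ← Finset.sum_add_distrib]
    refine Finset.sum_congr rfl (fun x _ => ?_)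
    simp only [Prod.fst_add, Prod.snd_add, Pi.add_apply, codeCup, deltaHat, checkBasis]
    simp [Finset.sum_ite_eq', Finset.mem_filter]
  rw [step, hpart a₁, hpart a₂,
    cardsplit _ _ _ _ (hd1 a₁) (hd2 a₁) (hd3 a₁),
    cardsplit _ _ _ _ (hd1 a₂) (hd2 a₂) (hd3 a₂)]
  push_cast
  rw [Finset.inter_comm (δin a₂) (δout a₁), Finset.inter_comm (δout a₂) (δout a₁),
    Finset.inter_comm (δfree a₂) (δout a₁)]
  have h2 : (2 : ZMod 2) = 0 := rfl
  linear_combination ((δout a₁ ∩ δin a₂).card : ZMod 2) * h2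

end Aux

/-- For `Λ = 2`, the integrated Leibniz rule
`∫₁(δ(a₁) ∪ a₂ + a₁ ∪ δ(a₂)) = 0` for all checks `a₁, a₂ ∈ X₀` holds if and only if
`|δ_in(a)| + |δ_out(a)| ≡ 0 (mod 2)` for all `a`, and
`|δ_in(a₁)∩δ_in(a₂)| + |δ_out(a₁)∩δ_out(a₂)| + |δ_out(a₁)∩δ_free(a₂)| +
 |δ_free(a₁)∩δ_in(a₂)| ≡ 0 (mod 2)` for all `a₁ ≠ a₂`. -/

theorem stmt10 {X₀ X₁ : Type*} [Fintype X₀] [Fintype X₁] [DecidableEq X₀] [DecidableEq X₁]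
    (δ δin δout δfree : X₀ → Finset X₁)
    (hpart : ∀ a, δ a = δin a ∪ δout a ∪ δfree a)
    (hd1 : ∀ a, Disjoint (δin a) (δout a))
    (hd2 : ∀ a, Disjoint (δin a) (δfree a))
    (hd3 : ∀ a, Disjoint (δout a) (δfree a)) :
    (∀ a₁ a₂ : X₀,
      integ (codeCup δin δout (deltaHat δ (checkBasis a₁)) (checkBasis a₂)
        + codeCup δin δout (checkBasis a₁) (deltaHat δ (checkBasis a₂))) = 0)
    ↔ ((∀ a : X₀, ((δin a).card + (δout a).card) % 2 = 0) ∧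
       (∀ a₁ a₂ : X₀, a₁ ≠ a₂ →
         ((δin a₁ ∩ δin a₂).card + (δout a₁ ∩ δout a₂).card
           + (δout a₁ ∩ δfree a₂).card + (δfree a₁ ∩ δin a₂).card) % 2 = 0)) := by

  have hiff : ∀ n : ℕ, ((n : ZMod 2) = 0 ↔ n % 2 = 0) := by
    intro n
    rw [ZMod.natCast_eq_zero_iff, Nat.dvd_iff_mod_eq_zero]
  constructor
  · intro h
    refine ⟨fun a => ?_, fun a₁ a₂ _ => ?_⟩
    · have := (hiff _).mp ((key δ δin δout δfree hpart hd1 hd2 hd3 a a).symm.trans (h a a))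
      rw [Finset.inter_self, Finset.inter_self,
        Finset.disjoint_iff_inter_eq_empty.mp (hd3 a),
        Finset.disjoint_iff_inter_eq_empty.mp (hd2 a).symm] at this
      simpa using this
    · exact (hiff _).mp ((key δ δin δout δfree hpart hd1 hd2 hd3 a₁ a₂).symm.trans (h a₁ a₂))
  · rintro ⟨h1, h2⟩ a₁ a₂
    rw [key δ δin δout δfree hpart hd1 hd2 hd3 a₁ a₂, (hiff _).mpr]
    by_cases hne : a₁ = a₂
    · subst hne
      rw [Finset.inter_self, Finset.inter_self,
        Finset.disjoint_iff_inter_eq_empty.mp (hd3 a₁),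
        Finset.disjoint_iff_inter_eq_empty.mp (hd2 a₁).symm]
      simpa using h1 a₁
    · exact h2 a₁ a₂ hne
end

section
/- Let G be a finite abelian group and c = c_in + c_out + c_free ∈ F₂[G] with pairwise disjoint supports, |c_in| = 1, c_out = inv(c_in) (where inv(g) = g⁻¹ extended linearly), and inv(c_free) = c_free. Then for the group algebra code complex F₂[G] →^{·c} F₂[G] with δ_in(g) = c_in·g, δ_out(g) = c_out·g, δ_free(g) = c_free·g: (a) the splitting commutes with the G-action, (b) δ_in(g)∩δ_in(h) = ∅ and δ_out(g)∩δ_out(h) = ∅ for g ≠ h ∈ G, and (c) |δ_out(g)∩δ_free(h)| + |δ_free(g)∩δ_in(h)| ≡ 0 mod 2 for all g ≠ h ∈ G. -/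
/-- Let `G` be a finite abelian group and `c = c_in + c_out + c_free`
in `F₂[G]` (elements identified with their supports, as `Finset G`s) with pairwise
disjoint supports, `|c_in| = 1`, `c_out = inv(c_in)` and `inv(c_free) = c_free`.
For the group algebra code `F₂[G] →^{·c} F₂[G]` with
`δ_in(g) = c_in·g`, `δ_out(g) = c_out·g`, `δ_free(g) = c_free·g`:
(a) the splitting commutes with the `G`-action,
(b) no two distinct checks share an incoming bit or an outgoing bit, and
(c) `|δ_out(g) ∩ δ_free(h)| + |δ_free(g) ∩ δ_in(h)| ≡ 0 (mod 2)` for `g ≠ h`. -/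
theorem stmt12 {G : Type*} [CommGroup G] [Fintype G] [DecidableEq G]
    (cin cout cfree : Finset G)
    (hdisj1 : Disjoint cin cout) (hdisj2 : Disjoint cin cfree)
    (hdisj3 : Disjoint cout cfree)
    (hcard : cin.card = 1)
    (hinv : cout = cin.image (fun g => g⁻¹))
    (hfreeinv : cfree.image (fun g => g⁻¹) = cfree) :
    (∀ g h : G,
      cin.image (fun s => s * (g * h)) = (cin.image (fun s => s * h)).image (fun x => g * x) ∧
      cout.image (fun s => s * (g * h)) = (cout.image (fun s => s * h)).image (fun x => g * x) ∧
      cfree.image (fun s => s * (g * h)) = (cfree.image (fun s => s * h)).image (fun x => g * x)) ∧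
    (∀ g h : G, g ≠ h →
      Disjoint (cin.image (fun s => s * g)) (cin.image (fun s => s * h)) ∧
      Disjoint (cout.image (fun s => s * g)) (cout.image (fun s => s * h))) ∧
    (∀ g h : G, g ≠ h →
      (((cout.image (fun s => s * g)) ∩ (cfree.image (fun s => s * h))).card
        + ((cfree.image (fun s => s * g)) ∩ (cin.image (fun s => s * h))).card) % 2 = 0) := by

  obtain ⟨a, ha⟩ := Finset.card_eq_one.mp hcard
  subst ha hinv
  have key : ∀ x : G, x ∈ cfree ↔ x⁻¹ ∈ cfree := by
    intro x
    conv_lhs => rw [← hfreeinv]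
    simp only [Finset.mem_image]
    constructor
    · rintro ⟨y, hy, rfl⟩; simpa using hy
    · intro hx; exact ⟨x⁻¹, hx, by simp⟩
  refine ⟨?_, ?_, ?_⟩
  · intro g h
    refine ⟨?_, ?_, ?_⟩ <;>
    · rw [Finset.image_image]
      apply Finset.image_congr
      intro s _
      simp [mul_left_comm, Function.comp]
  · intro g h hgh
    constructor <;>
    · simp only [Finset.image_singleton, Finset.disjoint_singleton]
      intro e
      exact hgh (mul_left_cancel e)
  · intro g h hgh
    simp only [Finset.image_singleton]
    have h1 : a⁻¹ * g ∈ cfree.image (fun s => s * h) ↔ a⁻¹ * g * h⁻¹ ∈ cfree := by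
      simp only [Finset.mem_image]
      constructor
      · rintro ⟨f, hf, hfe⟩
        have : f = a⁻¹ * g * h⁻¹ := by rw [← hfe]; group
        rwa [← this]
      · intro hf; exact ⟨_, hf, by group⟩
    have h2 : a * h ∈ cfree.image (fun s => s * g) ↔ a * h * g⁻¹ ∈ cfree := by
      simp only [Finset.mem_image]
      constructor
      · rintro ⟨f, hf, hfe⟩
        have : f = a * h * g⁻¹ := by rw [← hfe]; group
        rwa [← this]
      · intro hf; exact ⟨_, hf, by group⟩
    have h3 : a⁻¹ * g * h⁻¹ ∈ cfree ↔ a * h * g⁻¹ ∈ cfree := by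
      rw [key]
      have : (a⁻¹ * g * h⁻¹)⁻¹ = a * h * g⁻¹ := by
        simp [mul_comm, mul_left_comm, mul_assoc]
      rw [this]
    rw [Finset.singleton_inter, Finset.inter_comm (cfree.image _), Finset.singleton_inter]
    by_cases hm : a⁻¹ * g ∈ cfree.image (fun s => s * h)
    · have hm2 : a * h ∈ cfree.image (fun s => s * g) := h2.mpr (h3.mp (h1.mp hm))
      simp [h1.mp hm, h2.mp hm2]
    · have hn1 : a⁻¹ * g * h⁻¹ ∉ cfree := fun x => hm (h1.mpr x)
      have hn2 : a * h * g⁻¹ ∉ cfree := fun x => hn1 (h3.mpr x)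
      simp [hn1, hn2]
end

section
/- Let Ψ: C¹ × ... × C¹ → Z/2 be a multilinear map on Λ copies of the degree-1 part of a cochain complex C over F₂ that descends to cohomology (i.e., Ψ(z₁,...,z_s + δ(a),...,z_Λ) = Ψ(z₁,...,z_Λ) for cocycles zᵢ and a ∈ C⁰). Then the diagonal unitary U_Ψ on (C²)^{⊗n·Λ} defined by U_Ψ|c₁,...,c_Λ⟩ = (-1)^{Ψ(c₁,...,c_Λ)}|c₁,...,c_Λ⟩ preserves the CSS codespace spanned by the states |[γ₁],...,[γ_Λ]⟩ = Σ_{b₁,...,b_Λ ∈ B¹} |γ₁+b₁,...,γ_Λ+b_Λ⟩, acting on each basis codestate by the scalar (-1)^{Ψ(γ₁,...,γ_Λ)}. -/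
open scoped BigOperators

/-- The (unnormalized) codestate `|[γ₁],…,[γ_Λ]⟩ = Σ_{b₁,…,b_Λ ∈ C⁰} |γ₁+δ⁰b₁,…,γ_Λ+δ⁰b_Λ⟩`
of `Λ` copies of a CSS code, as an element of the computational-basis function space. -/
noncomputable def codestate {C0 C1 : Type*} [Fintype C0] [DecidableEq C1]
    [AddCommGroup C0] [Module (ZMod 2) C0] [AddCommGroup C1] [Module (ZMod 2) C1]
    (δ0 : C0 →ₗ[ZMod 2] C1) {Λ : ℕ} (γ : Fin Λ → C1) : (Fin Λ → C1) → ℂ :=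
  fun c => ∑ b : Fin Λ → C0, if (∀ i, c i = γ i + δ0 (b i)) then 1 else 0

/-- Let `C⁰ →^{δ⁰} C¹ →^{δ¹} C²` be a CSS code complex over `F₂` and
`Ψ` a multilinear map on `Λ` copies of `C¹` descending to cohomology.  Then the
diagonal unitary `U_Ψ |c₁,…,c_Λ⟩ = (-1)^{Ψ(c₁,…,c_Λ)} |c₁,…,c_Λ⟩` preserves the
codespace: it acts on each basis codestate `|[γ₁],…,[γ_Λ]⟩` by the scalar
`(-1)^{Ψ(γ₁,…,γ_Λ)}`. -/
theorem stmt15 {C0 C1 C2 : Type*} [Fintype C0] [Fintype C1] [DecidableEq C1]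
    [AddCommGroup C0] [Module (ZMod 2) C0] [AddCommGroup C1] [Module (ZMod 2) C1]
    [AddCommGroup C2] [Module (ZMod 2) C2]
    (δ0 : C0 →ₗ[ZMod 2] C1) (δ1 : C1 →ₗ[ZMod 2] C2)
    (hcomplex : ∀ a : C0, δ1 (δ0 a) = 0)
    (Λ : ℕ) (Ψ : (Fin Λ → C1) → ZMod 2)
    (hlin : ∀ (j : Fin Λ) (c : Fin Λ → C1) (u v : C1),
      Ψ (Function.update c j (u + v))
        = Ψ (Function.update c j u) + Ψ (Function.update c j v))
    (hdesc : ∀ (z : Fin Λ → C1), (∀ i, δ1 (z i) = 0) →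
      ∀ (s : Fin Λ) (a : C0), Ψ (Function.update z s (z s + δ0 a)) = Ψ z)
    (γ : Fin Λ → C1) (hγ : ∀ i, δ1 (γ i) = 0) :
    (fun c => (-1 : ℂ) ^ ((Ψ c).val) * codestate δ0 γ c)
      = ((-1 : ℂ) ^ ((Ψ γ).val)) • codestate δ0 γ := by
    -- key lemma: Ψ is invariant under shifting each coordinate by a coboundary
  have key : ∀ (b : Fin Λ → C0), Ψ (fun i => γ i + δ0 (b i)) = Ψ γ := by
    intro b
    -- interpolating family
    let g : ℕ → (Fin Λ → C1) := fun k i => if (i : ℕ) < k then γ i + δ0 (b i) else γ i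
    have hg : ∀ k, Ψ (g k) = Ψ γ := by
      intro k
      induction k with
      | zero => simp [g]
      | succ k ih =>
        by_cases hk : k < Λ
        · have hstep : g (k + 1) = Function.update (g k) ⟨k, hk⟩ (g k ⟨k, hk⟩ + δ0 (b ⟨k, hk⟩)) := by
            funext i
            by_cases hik : i = ⟨k, hk⟩
            · subst hik
              simp [g, Function.update_self]
            · have hik' : (i : ℕ) ≠ k := fun h => hik (Fin.ext h)
              have : ((i : ℕ) < k + 1) ↔ ((i : ℕ) < k) := by omega
              simp [g, Function.update_of_ne hik, this]
          have hcoc : ∀ i, δ1 (g k i) = 0 := by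
            intro i
            by_cases h : (i : ℕ) < k <;> simp [g, h, map_add, hγ i, hcomplex]
          rw [hstep, hdesc (g k) hcoc ⟨k, hk⟩ (b ⟨k, hk⟩), ih]
        · have : g (k + 1) = g k := by
            funext i
            have hi : (i : ℕ) < k ∧ (i : ℕ) < k + 1 := ⟨by omega, by omega⟩
            simp [g, hi.1, hi.2]
          rw [this, ih]
    have hΛ : g Λ = fun i => γ i + δ0 (b i) := by
      funext i; simp [g, i.isLt]
    rw [← hΛ]; exact hg Λ
  funext c
  simp only [Pi.smul_apply, smul_eq_mul, codestate, Finset.mul_sum]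
  refine Finset.sum_congr rfl fun b _ => ?_
  by_cases h : ∀ i, c i = γ i + δ0 (b i)
  · have hc : c = fun i => γ i + δ0 (b i) := funext h
    rw [if_pos h, hc, key b]
  · simp [h]
end

section
/- Suppose each of Λ complexes C(X^(i), Z/2) (two-term, over F₂) is equipped with a pre-orientation, a cup product, and the integral ∫₁ sending each bit to 1, satisfying the integrated Λ-fold Leibniz rule: ∫₁ Σ_{j=1}^Λ x₁ ∪ ... ∪ δ(xⱼ) ∪ ... ∪ x_Λ = 0. Then on the Λ-fold tensor product complex C(X⃗, Z/2), the map Ψ(x⃗₁,...,x⃗_Λ) = ∫_Λ x⃗₁ ∪ ... ∪ x⃗_Λ on degree-1 cochains is a cohomology invariant: for cocycles z⃗ᵢ ∈ Z¹ and any a⃗ ∈ C⁰, Ψ(z⃗₁,...,z⃗_s + δ(a⃗),...,z⃗_Λ) = Ψ(z⃗₁,...,z⃗_Λ). -/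
/-!  We model cochains of a two-term classical code complex `C⁰(X) → C¹(X)` over `F₂`
as `F₂`-valued functions on `X₀ ⊕ X₁` (degree 0 basis ⊕ degree 1 basis; degrees ≥ 2
vanish in a two-term complex), and cochains of the `Λ`-fold tensor product complex as
`F₂`-valued functions on `Π i, (X₀ i ⊕ X₁ i)` (whose elements of exactly `k` "right"
coordinates form the degree-`k` basis).  The tensor-product cup product
`(x₁⊗y₁) ∪ (x₂⊗y₂) = (x₁∪x₂)⊗(y₁∪y₂)` (signs are trivial over `F₂`) acts
coordinatewise via the basis-level classical cup product. -/

/-- Basis-level cup product coefficient of a classical code with pre-orientation: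
`a ∪ a = a`, `a ∪ x = x` for `x ∈ δ_out(a)`, `x ∪ a = x` for `x ∈ δ_in(a)`,
zero otherwise. -/
def ccup {A B : Type*} [DecidableEq A] [DecidableEq B]
    (δin δout : A → Finset B) : (A ⊕ B) → (A ⊕ B) → (A ⊕ B) → ZMod 2
  | Sum.inl a, Sum.inl a', u => if a = a' ∧ u = Sum.inl a then 1 else 0
  | Sum.inl a, Sum.inr x, u => if x ∈ δout a ∧ u = Sum.inr x then 1 else 0
  | Sum.inr x, Sum.inl a, u => if x ∈ δin a ∧ u = Sum.inr x then 1 else 0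
  | Sum.inr _, Sum.inr _, _ => 0

/-- Cup product on classical cochains. -/
def classCup {A B : Type*} [Fintype A] [Fintype B] [DecidableEq A] [DecidableEq B]
    (δin δout : A → Finset B) (f g : (A ⊕ B) → ZMod 2) : (A ⊕ B) → ZMod 2 :=
  fun u => ∑ v : A ⊕ B, ∑ w : A ⊕ B, f v * g w * ccup δin δout v w u

/-- Coboundary of the two-term classical complex (zero on degree 1). -/
def classDelta {A B : Type*} [Fintype A] [DecidableEq B]
    (δc : A → Finset B) (f : (A ⊕ B) → ZMod 2) : (A ⊕ B) → ZMod 2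
  | Sum.inl _ => 0
  | Sum.inr x => ∑ a ∈ Finset.univ.filter (fun a => x ∈ δc a), f (Sum.inl a)

/-- The 1-dimensional integral: sum over all bits. -/
def classInt {A B : Type*} [Fintype B] (f : (A ⊕ B) → ZMod 2) : ZMod 2 :=
  ∑ x : B, f (Sum.inr x)

/-- `Λ`-fold cup product `((a₁ ∪ a₂) ∪ ⋯) ∪ a_Λ` on a classical code, `Λ = m + 1`. -/
def classCupFold {A B : Type*} [Fintype A] [Fintype B] [DecidableEq A] [DecidableEq B]
    (δin δout : A → Finset B) {m : ℕ} (a : Fin (m + 1) → ((A ⊕ B) → ZMod 2)) :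
    (A ⊕ B) → ZMod 2 :=
  (List.ofFn fun j : Fin m => a j.succ).foldl (classCup δin δout) (a 0)

section Tensor

variable {n : ℕ} (X₀ X₁ : Fin (n + 1) → Type*)
variable [∀ i, Fintype (X₀ i)] [∀ i, Fintype (X₁ i)]
variable [∀ i, DecidableEq (X₀ i)] [∀ i, DecidableEq (X₁ i)]

/-- Cup product on the tensor product complex (coordinatewise; trivial signs over `F₂`). -/
def tensorCup (δin δout : ∀ i, X₀ i → Finset (X₁ i))
    (f g : (∀ i, X₀ i ⊕ X₁ i) → ZMod 2) : (∀ i, X₀ i ⊕ X₁ i) → ZMod 2 :=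
  fun u => ∑ v : ∀ i, X₀ i ⊕ X₁ i, ∑ w : ∀ i, X₀ i ⊕ X₁ i,
    f v * g w * ∏ i, ccup (δin i) (δout i) (v i) (w i) (u i)

/-- Differential of the tensor product complex (trivial signs over `F₂`). -/
def tensorDelta (δc : ∀ i, X₀ i → Finset (X₁ i))
    (f : (∀ i, X₀ i ⊕ X₁ i) → ZMod 2) : (∀ i, X₀ i ⊕ X₁ i) → ZMod 2 :=
  fun u => ∑ i : Fin (n + 1),
    (match u i with
     | Sum.inl _ => (0 : ZMod 2)
     | Sum.inr x => ∑ a ∈ Finset.univ.filter (fun a => x ∈ δc i a),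
         f (Function.update u i (Sum.inl a)))

/-- The `Λ`-dimensional integral on the tensor product complex: sum over the
top-degree basis (all coordinates bits). -/
def tensorInt (f : (∀ i, X₀ i ⊕ X₁ i) → ZMod 2) : ZMod 2 :=
  ∑ x : ∀ i, X₁ i, f (fun i => Sum.inr (x i))

/-- `Λ`-fold cup product on the tensor product complex, `Λ = n + 1`. -/
def tensorCupFold (δin δout : ∀ i, X₀ i → Finset (X₁ i))
    (z : Fin (n + 1) → ((∀ i, X₀ i ⊕ X₁ i) → ZMod 2)) :
    (∀ i, X₀ i ⊕ X₁ i) → ZMod 2 :=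
  (List.ofFn fun j : Fin n => z j.succ).foldl (tensorCup X₀ X₁ δin δout) (z 0)

/-- Degree of a basis point of the tensor product complex. -/
def ptDeg (u : ∀ i, X₀ i ⊕ X₁ i) : ℕ :=
  (Finset.univ.filter fun i => (u i).isRight).card

/-!
`Ψ(w₁, …, w_Λ) = ∫_Λ w₁ ∪ ⋯ ∪ w_Λ` is multilinear, and on pure tensors it factors into the
product of the `Λ` one-dimensional integrals of the coordinatewise cup products. As `δ` of a pure
tensor is the sum over the coordinates `i` of the pure tensors with `δ` applied in coordinate `i`,
the integrated Leibniz rules of the factors add up to the tensor one,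
`∑ⱼ Ψ(w₁, …, δwⱼ, …, w_Λ) = 0`, first for pure tensors and then, by multilinearity, for all `w`.
Applied to the cocycles `z` with `z_s` replaced by `a`, it gives `Ψ(z₁, …, δa, …, z_Λ) = 0`, and
additivity of `Ψ` in the `s`-th slot concludes.
-/

section FoldMultilinear

variable {R M : Type*} [CommSemiring R] [AddCommMonoid M] [Module R M]

def foldlMultilinear (B : M →ₗ[R] M →ₗ[R] M) :
    ∀ m : ℕ, MultilinearMap R (fun _ : Fin (m + 1) => M) M
  | 0 => MultilinearMap.ofSubsingleton R M M (0 : Fin 1) LinearMap.id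
  | m + 1 => (B.compMultilinearMap (foldlMultilinear B m)).uncurryRight

theorem foldlMultilinear_apply (B : M →ₗ[R] M →ₗ[R] M) (m : ℕ) (z : Fin (m + 1) → M) :
    foldlMultilinear B m z = (List.ofFn fun j : Fin m => z j.succ).foldl (B · ·) (z 0) := by
  induction m with
  | zero => rfl
  | succ m ih =>
    rw [List.ofFn_succ', List.concat_eq_append, List.foldl_append]
    exact congrArg (B · _) (ih _)

end FoldMultilinear

abbrev TensorCochain := (∀ i, X₀ i ⊕ X₁ i) → ZMod 2

section Leibniz

variable (δc δin δout : ∀ i, X₀ i → Finset (X₁ i))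

def tensorCupₗ :
    TensorCochain X₀ X₁ →ₗ[ZMod 2] TensorCochain X₀ X₁ →ₗ[ZMod 2] TensorCochain X₀ X₁ :=
  LinearMap.mk₂ (ZMod 2) (tensorCup X₀ X₁ δin δout)
    (fun f f' g => by funext u; simp [tensorCup, add_mul, Finset.sum_add_distrib])
    (fun c f g => by funext u; simp [tensorCup, Finset.mul_sum, mul_assoc])
    (fun f g g' => by funext u; simp [tensorCup, mul_add, add_mul, Finset.sum_add_distrib])
    (fun c f g => by funext u; simp [tensorCup, Finset.mul_sum, mul_assoc, mul_left_comm])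

def tensorIntₗ : TensorCochain X₀ X₁ →ₗ[ZMod 2] ZMod 2 where
  toFun := tensorInt X₀ X₁
  map_add' f g := by simp [tensorInt, Finset.sum_add_distrib]
  map_smul' c f := by simp [tensorInt, Finset.mul_sum]

def tensorDeltaₗ : TensorCochain X₀ X₁ →ₗ[ZMod 2] TensorCochain X₀ X₁ where
  toFun := tensorDelta X₀ X₁ δc
  map_add' f g := by
    funext u
    simp only [tensorDelta, Pi.add_apply, ← Finset.sum_add_distrib]
    refine Finset.sum_congr rfl fun i _ => ?_
    cases u i <;> simp [Finset.sum_add_distrib]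
  map_smul' c f := by
    funext u
    simp only [tensorDelta, Pi.smul_apply, smul_eq_mul, RingHom.id_apply, Finset.mul_sum]
    refine Finset.sum_congr rfl fun i _ => ?_
    cases u i <;> simp [Finset.mul_sum]

def integratedCup :
    MultilinearMap (ZMod 2) (fun _ : Fin (n + 1) => TensorCochain X₀ X₁) (ZMod 2) :=
  (tensorIntₗ X₀ X₁).compMultilinearMap (foldlMultilinear (tensorCupₗ X₀ X₁ δin δout) n)

theorem integratedCup_apply (w : Fin (n + 1) → TensorCochain X₀ X₁) :
    integratedCup X₀ X₁ δin δout w = tensorInt X₀ X₁ (tensorCupFold X₀ X₁ δin δout w) := by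
  simp only [integratedCup, LinearMap.compMultilinearMap_apply, foldlMultilinear_apply]
  rfl

def IntegratedLeibnizRule : Prop :=
  ∀ i : Fin (n + 1), ∀ a : Fin (n + 1) → ((X₀ i ⊕ X₁ i) → ZMod 2),
    ∑ j : Fin (n + 1), classInt (classCupFold (δin i) (δout i)
      (Function.update a j (classDelta (δc i) (a j)))) = 0

def pureTensor (f : ∀ i, (X₀ i ⊕ X₁ i) → ZMod 2) : TensorCochain X₀ X₁ :=
  fun u => ∏ i, f i (u i)

omit [∀ i, Fintype (X₀ i)] [∀ i, Fintype (X₁ i)] in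
theorem pi_single_eq_pureTensor (u : ∀ i, X₀ i ⊕ X₁ i) :
    Pi.single u 1 = pureTensor X₀ X₁ (fun i => Pi.single (u i) 1) := by
  funext p
  simp only [pureTensor, Pi.single_apply, Finset.prod_boole, Finset.mem_univ, true_implies]
  simp [funext_iff]

theorem tensorCup_pureTensor (f g : ∀ i, (X₀ i ⊕ X₁ i) → ZMod 2) :
    tensorCup X₀ X₁ δin δout (pureTensor X₀ X₁ f) (pureTensor X₀ X₁ g)
      = pureTensor X₀ X₁ (fun i => classCup (δin i) (δout i) (f i) (g i)) := by
  funext u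
  simp only [tensorCup, pureTensor, classCup, Finset.prod_univ_sum, Fintype.piFinset_univ,
    ← Finset.prod_mul_distrib]

theorem foldl_tensorCup_pureTensor (L : List (∀ i, (X₀ i ⊕ X₁ i) → ZMod 2))
    (f : ∀ i, (X₀ i ⊕ X₁ i) → ZMod 2) :
    (L.map (pureTensor X₀ X₁)).foldl (tensorCup X₀ X₁ δin δout) (pureTensor X₀ X₁ f)
      = pureTensor X₀ X₁
          (fun i => (L.map (· i)).foldl (classCup (δin i) (δout i)) (f i)) := by
  induction L generalizing f with
  | nil => rfl
  | cons g L ih => simp only [List.map_cons, List.foldl_cons, tensorCup_pureTensor, ih]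

theorem tensorCupFold_pureTensor (A : ∀ i, Fin (n + 1) → (X₀ i ⊕ X₁ i) → ZMod 2) :
    tensorCupFold X₀ X₁ δin δout (fun j => pureTensor X₀ X₁ (A · j))
      = pureTensor X₀ X₁ (fun i => classCupFold (δin i) (δout i) (A i)) := by
  have h := foldl_tensorCup_pureTensor X₀ X₁ δin δout
    (List.ofFn fun j : Fin n => (A · j.succ)) (A · 0)
  simp only [List.map_ofFn] at h
  exact h

omit [∀ i, Fintype (X₀ i)] [∀ i, DecidableEq (X₀ i)] [∀ i, DecidableEq (X₁ i)] in
theorem tensorInt_pureTensor (f : ∀ i, (X₀ i ⊕ X₁ i) → ZMod 2) :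
    tensorInt X₀ X₁ (pureTensor X₀ X₁ f) = ∏ i, classInt (f i) := by
  simp only [tensorInt, pureTensor, classInt, Finset.prod_univ_sum, Fintype.piFinset_univ]

omit [∀ i, Fintype (X₁ i)] [∀ i, DecidableEq (X₀ i)] in
theorem tensorDelta_pureTensor (f : ∀ i, (X₀ i ⊕ X₁ i) → ZMod 2) :
    tensorDelta X₀ X₁ δc (pureTensor X₀ X₁ f)
      = ∑ i, pureTensor X₀ X₁ (Function.update f i (classDelta (δc i) (f i))) := by
  funext u
  simp only [tensorDelta, Finset.sum_apply]
  refine Finset.sum_congr rfl fun i _ => ?_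
  have hprod : ∀ (i : Fin (n + 1)) (b : ZMod 2) (g : Fin (n + 1) → ZMod 2),
      ∏ k, Function.update g i b k = b * ∏ k ∈ Finset.univ.erase i, g k := fun i b g => by
    rw [Finset.prod_update_of_mem (Finset.mem_univ i), Finset.sdiff_singleton_eq_erase]
  simp only [pureTensor, Function.apply_update (fun k (g : _ → ZMod 2) => g (u k)),
    Function.apply_update (fun k (x : X₀ k ⊕ X₁ k) => f k x), hprod]
  cases u i with
  | inl a => simp [classDelta]
  | inr x => simp [classDelta, Finset.sum_mul]

theorem integratedCup_pureTensor (A : ∀ i, Fin (n + 1) → (X₀ i ⊕ X₁ i) → ZMod 2) :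
    integratedCup X₀ X₁ δin δout (fun j => pureTensor X₀ X₁ (A · j))
      = ∏ i, classInt (classCupFold (δin i) (δout i) (A i)) := by
  rw [integratedCup_apply, tensorCupFold_pureTensor, tensorInt_pureTensor]

omit [∀ i, Fintype (X₀ i)] [∀ i, Fintype (X₁ i)]
  [∀ i, DecidableEq (X₀ i)] [∀ i, DecidableEq (X₁ i)] in
theorem update_pureTensor_family (A : ∀ i, Fin (n + 1) → (X₀ i ⊕ X₁ i) → ZMod 2)
    (i j : Fin (n + 1)) (d : (X₀ i ⊕ X₁ i) → ZMod 2) :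
    Function.update (fun j => pureTensor X₀ X₁ (A · j)) j
        (pureTensor X₀ X₁ (Function.update (A · j) i d))
      = fun j' => pureTensor X₀ X₁ (Function.update A i (Function.update (A i) j d) · j') := by
  funext j'
  rcases eq_or_ne j' j with rfl | hj
  · rw [Function.update_self]
    refine congrArg (pureTensor X₀ X₁) (funext fun k => ?_)
    rcases eq_or_ne k i with rfl | hk <;> simp [*]
  · rw [Function.update_of_ne hj]
    refine congrArg (pureTensor X₀ X₁) (funext fun k => ?_)
    rcases eq_or_ne k i with rfl | hk <;> simp [*]

theorem sum_integratedCup_update_tensorDelta_pureTensor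
    (hLeib : IntegratedLeibnizRule X₀ X₁ δc δin δout)
    (A : ∀ i, Fin (n + 1) → (X₀ i ⊕ X₁ i) → ZMod 2) :
    ∑ j, integratedCup X₀ X₁ δin δout (Function.update (fun j => pureTensor X₀ X₁ (A · j)) j
        (tensorDelta X₀ X₁ δc (pureTensor X₀ X₁ (A · j)))) = 0 := by
  have hterm : ∀ i j, integratedCup X₀ X₁ δin δout
      (Function.update (fun j => pureTensor X₀ X₁ (A · j)) j
        (pureTensor X₀ X₁ (Function.update (A · j) i (classDelta (δc i) (A i j)))))
      = classInt (classCupFold (δin i) (δout i)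
            (Function.update (A i) j (classDelta (δc i) (A i j))))
        * ∏ k ∈ Finset.univ.erase i, classInt (classCupFold (δin k) (δout k) (A k)) := by
    intro i j
    rw [update_pureTensor_family, integratedCup_pureTensor,
      ← Finset.mul_prod_erase _ _ (Finset.mem_univ i), Function.update_self]
    congr 1
    refine Finset.prod_congr rfl fun k hk => ?_
    rw [Function.update_of_ne (Finset.ne_of_mem_erase hk)]
  simp_rw [tensorDelta_pureTensor, MultilinearMap.map_update_sum, hterm]
  rw [Finset.sum_comm]
  exact Finset.sum_eq_zero fun i _ => by rw [← Finset.sum_mul, hLeib i (A i), zero_mul]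

theorem sum_integratedCup_update_tensorDelta
    (hLeib : IntegratedLeibnizRule X₀ X₁ δc δin δout)
    (w : Fin (n + 1) → TensorCochain X₀ X₁) :
    ∑ j, integratedCup X₀ X₁ δin δout (Function.update w j (tensorDelta X₀ X₁ δc (w j))) = 0 := by
  let L : MultilinearMap (ZMod 2) (fun _ : Fin (n + 1) => TensorCochain X₀ X₁) (ZMod 2) :=
    ∑ j, (integratedCup X₀ X₁ δin δout).compLinearMap
      (Function.update (fun _ => LinearMap.id) j (tensorDeltaₗ X₀ X₁ δc))
  have hL : ∀ w, L w
      = ∑ j, integratedCup X₀ X₁ δin δout (Function.update w j (tensorDelta X₀ X₁ δc (w j))) := by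
    intro w
    simp only [L, sum_apply, MultilinearMap.compLinearMap_apply]
    refine Finset.sum_congr rfl fun j _ => congrArg _ (funext fun k => ?_)
    rcases eq_or_ne k j with rfl | hk
    · simp [tensorDeltaₗ]
    · simp [hk]
  -- `L` is multilinear, so it vanishes once it does on point masses, which are pure tensors.
  have hL0 : L = 0 := Module.Basis.ext_multilinear (fun _ => Pi.basisFun (ZMod 2) _) fun v => by
    simp only [hL, Pi.basisFun_apply, pi_single_eq_pureTensor, zero_apply]
    exact sum_integratedCup_update_tensorDelta_pureTensor X₀ X₁ δc δin δout hLeib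
      (fun i j => Pi.single (v j i) 1)
  rw [← hL, hL0, zero_apply]

end Leibniz

theorem stmt17
    (δc δin δout : ∀ i, X₀ i → Finset (X₁ i))
    (hLeib : ∀ i : Fin (n + 1), ∀ a : Fin (n + 1) → ((X₀ i ⊕ X₁ i) → ZMod 2),
      ∑ j : Fin (n + 1), classInt (classCupFold (δin i) (δout i)
        (Function.update a j (classDelta (δc i) (a j)))) = 0)
    (z : Fin (n + 1) → ((∀ i, X₀ i ⊕ X₁ i) → ZMod 2))
    (hzcoc : ∀ j, tensorDelta X₀ X₁ δc (z j) = 0)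
    (a : (∀ i, X₀ i ⊕ X₁ i) → ZMod 2)
    (s : Fin (n + 1)) :
    tensorInt X₀ X₁
        (tensorCupFold X₀ X₁ δin δout
          (Function.update z s (z s + tensorDelta X₀ X₁ δc a)))
      = tensorInt X₀ X₁ (tensorCupFold X₀ X₁ δin δout z) := by
  have hexact :
      integratedCup X₀ X₁ δin δout (Function.update z s (tensorDelta X₀ X₁ δc a)) = 0 := by
    have h := sum_integratedCup_update_tensorDelta X₀ X₁ δc δin δout hLeib (Function.update z s a)
    rwa [Fintype.sum_eq_single s fun j hj => by
        rw [Function.update_of_ne hj, hzcoc, MultilinearMap.map_update_zero],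
      Function.update_self, Function.update_idem] at h
  rw [← integratedCup_apply, ← integratedCup_apply, MultilinearMap.map_update_add, hexact,
    add_zero, Function.update_eq_self]

end Tensor
end
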